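/- arXiv:2603.25028 — 2 statements merged into one kernel-verified Lean document; each statement's English description precedes it below -/
import Mathlib

section
/- Let N ≥ 2 and α ∈ (0,1). Let Ω ⊂ ℝ^N be a bounded domain with 0 ∈ ∂Ω. Then for every u ∈ C_c^∞(Ω), one has ∫_Ω |x|^{α-2} u(x)^2 dx ≤ (4/(N-2+α)^2) ∫_Ω |x|^α |∇u(x)|^2 dx. -/
set_option maxHeartbeats 1000000

open MeasureTheory Real Set Function

lemma integral_pi_div_eq_zero {n : ℕ} (f : Fin (n+1) → (Fin (n+1) → ℝ) → ℝ)
    (f' : Fin (n+1) → (Fin (n+1) → ℝ) → ((Fin (n+1) → ℝ) →L[ℝ] ℝ))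
    (hd : ∀ i x, HasFDerivAt (f i) (f' i x) x)
    (hcs : ∀ i, HasCompactSupport (f i))
    (hcd : Continuous (fun x => ∑ i, f' i x (Pi.single i 1))) :
    ∫ x, ∑ i, f' i x (Pi.single i 1) = 0 := by
  set K : Set (Fin (n+1) → ℝ) := ⋃ i, tsupport (f i) with hK
  have hKc : IsCompact K := isCompact_iUnion fun i => hcs i
  have hKcl : IsClosed K := isClosed_iUnion_of_finite fun i => isClosed_tsupport _
  obtain ⟨R, hR0, hR⟩ := hKc.isBounded.subset_closedBall_lt 0 0
  set a : Fin (n+1) → ℝ := fun _ => -(R+1) with ha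
  set b : Fin (n+1) → ℝ := fun _ => (R+1) with hb
  have hle : a ≤ b := fun i => by simp only [ha, hb]; linarith
  have hcoord : ∀ x ∈ K, ∀ i, |x i| ≤ R := by
    intro x hx i
    have h1 := hR hx
    simp only [Metric.mem_closedBall, dist_zero_right] at h1
    exact le_trans (norm_le_pi_norm x i) h1
  -- divergence vanishes off K
  have hdiv0 : ∀ x ∉ K, ∀ i, f' i x = 0 := by
    intro x hx i
    have hxi : x ∉ tsupport (f i) := fun h => hx (Set.mem_iUnion.2 ⟨i, h⟩)
    have hev : f i =ᶠ[nhds x] (fun _ => (0:ℝ)) := by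
      filter_upwards [(isClosed_tsupport (f i)).isOpen_compl.mem_nhds hxi] with y hy
      exact image_eq_zero_of_notMem_tsupport hy
    exact (hd i x).unique ((hasFDerivAt_const (0:ℝ) x).congr_of_eventuallyEq hev)
  have hdivK : Function.support (fun x => ∑ i, f' i x (Pi.single i 1)) ⊆ K := by
    intro x hx
    by_contra h
    exact hx (by simp [fun i => hdiv0 x h i])
  have hKsub : K ⊆ Set.Icc a b := by
    intro x hx
    refine ⟨fun i => ?_, fun i => ?_⟩ <;> have := abs_le.1 (hcoord x hx i)
    · simp only [ha]; linarith [this.1]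
    · simp only [hb]; linarith [this.2]
  have hdivcs : HasCompactSupport (fun x => ∑ i, f' i x (Pi.single i 1)) :=
    HasCompactSupport.of_support_subset_isCompact hKc hdivK
  have hint : Integrable (fun x => ∑ i, f' i x (Pi.single i 1)) :=
    hcd.integrable_of_hasCompactSupport hdivcs
  have key := integral_divergence_of_hasFDerivAt_off_countable' a b hle
    f f' ∅ Set.countable_empty
    (fun i x _ => (hd i x).continuousAt.continuousWithinAt)
    (fun x _ i => hd i x) hint.integrableOn
  have hLHS : ∫ x in Set.Icc a b, ∑ i, f' i x (Pi.single i 1)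
      = ∫ x, ∑ i, f' i x (Pi.single i 1) := by
    refine setIntegral_eq_integral_of_forall_compl_eq_zero fun x hx => ?_
    have hxK : x ∉ K := fun h => hx (hKsub h)
    simp [fun i => hdiv0 x hxK i]
  have hface : ∀ (i : Fin (n+1)) (c : ℝ), |c| = R + 1 →
      (∫ x in Set.Icc (a ∘ i.succAbove) (b ∘ i.succAbove), f i (i.insertNth c x)) = 0 := by
    intro i c hc
    have : ∀ x, f i (i.insertNth c x) = 0 := by
      intro x
      apply image_eq_zero_of_notMem_tsupport
      intro hmem
      have hKm : (i.insertNth c x) ∈ K := Set.mem_iUnion.2 ⟨i, hmem⟩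
      have := hcoord _ hKm i
      rw [Fin.insertNth_apply_same, hc] at this
      linarith
    simp [this]
  rw [hLHS] at key
  rw [key, Finset.sum_eq_zero]
  intro i _
  rw [hface i (b i) (by simp [hb]; linarith), hface i (a i) (by simp [ha]; rw [abs_of_nonpos] <;> linarith), sub_zero]

lemma integral_euc_div_eq_zero {n : ℕ} (f : Fin (n+1) → EuclideanSpace ℝ (Fin (n+1)) → ℝ)
    (f' : Fin (n+1) → EuclideanSpace ℝ (Fin (n+1)) → (EuclideanSpace ℝ (Fin (n+1)) →L[ℝ] ℝ))
    (hd : ∀ i x, HasFDerivAt (f i) (f' i x) x)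
    (hcs : ∀ i, HasCompactSupport (f i))
    (hcd : Continuous (fun x => ∑ i, f' i x (EuclideanSpace.single i 1))) :
    ∫ x, ∑ i, f' i x (EuclideanSpace.single i 1) = 0 := by
  set eL := (EuclideanSpace.equiv (Fin (n+1)) ℝ : EuclideanSpace ℝ (Fin (n+1)) ≃L[ℝ] (Fin (n+1) → ℝ))
  have hsingle : ∀ i : Fin (n+1), eL.symm (Pi.single i 1) = EuclideanSpace.single i 1 := fun i => rfl
  have key := integral_pi_div_eq_zero (fun i x => f i (eL.symm x))
    (fun i x => (f' i (eL.symm x)).comp (eL.symm : (Fin (n+1) → ℝ) →L[ℝ] _))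
    (fun i x => (hd i (eL.symm x)).comp x (eL.symm.hasFDerivAt))
    (fun i => (hcs i).comp_homeomorph eL.symm.toHomeomorph)
    (by
      have : Continuous (eL.symm : (Fin (n+1) → ℝ) → EuclideanSpace ℝ (Fin (n+1))) :=
        eL.symm.continuous
      simpa [hsingle, Function.comp_def] using hcd.comp this)
  have hmp := (EuclideanSpace.volume_preserving_symm_measurableEquiv_toLp (Fin (n+1))).symm
  have hcomp := hmp.integral_comp (MeasurableEquiv.measurableEmbedding _)
    (fun x => ∑ i, f' i x (EuclideanSpace.single i 1))
  rw [← hcomp]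
  simp [hsingle] at key
  exact key

section helpers

variable {n : ℕ}

local notation "E" => EuclideanSpace ℝ (Fin (n+1))

lemma cont_aux (β : ℝ) (g : E → ℝ) (hg : Continuous g)
    (h0 : (0 : E) ∉ tsupport g) : Continuous (fun x : E => ‖x‖ ^ β * g x) := by
  rw [continuous_iff_continuousAt]; intro x
  by_cases hx : x ∈ tsupport g
  · have hx0 : x ≠ 0 := fun h => h0 (h ▸ hx)
    exact ((Real.continuousAt_rpow_const _ _
      (Or.inl (norm_ne_zero_iff.2 hx0))).comp continuous_norm.continuousAt).mul hg.continuousAt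
  · have hev : (fun y : E => ‖y‖ ^ β * g y) =ᶠ[nhds x] fun _ => 0 := by
      filter_upwards [(isClosed_tsupport g).isOpen_compl.mem_nhds hx] with y hy
      simp [image_eq_zero_of_notMem_tsupport hy]
    exact ContinuousAt.congr continuousAt_const hev.symm

lemma integrable_aux (β : ℝ) (g : E → ℝ) (hg : Continuous g) (hgc : HasCompactSupport g)
    (h0 : (0 : E) ∉ tsupport g) : Integrable (fun x : E => ‖x‖ ^ β * g x) := by
  refine (cont_aux β g hg h0).integrable_of_hasCompactSupport ?_
  refine HasCompactSupport.of_support_subset_isCompact hgc ?_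
  intro x hx
  have : g x ≠ 0 := fun h => hx (by simp [h])
  exact subset_tsupport g this

end helpers


lemma amgm_aux (s v t : ℝ) (hs : 0 < s) : 2 * (v * t) ≤ (s/2) * v ^ 2 + (2/s) * t ^ 2 := by
  have hs' : s ≠ 0 := ne_of_gt hs
  have hid : ((s/2) * v ^ 2 + (2/s) * t ^ 2) - 2 * (v * t) = (s * v - 2 * t) ^ 2 / (2 * s) := by
    field_simp
    ring
  have hnn : (0:ℝ) ≤ (s * v - 2 * t) ^ 2 / (2 * s) :=
    div_nonneg (sq_nonneg _) (by positivity)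
  linarith [hid, hnn]

section main
variable {n : ℕ}
local notation "E" => EuclideanSpace ℝ (Fin (n+1))

lemma hardy_aux (hn : 1 ≤ n) (α : ℝ) (hα0 : 0 < α) (hα1 : α < 1)
    (u : E → ℝ) (hu : ContDiff ℝ (⊤ : ℕ∞) u) (husupp : HasCompactSupport u)
    (h0u : (0 : E) ∉ tsupport u) :
    ∫ x : E, ‖x‖ ^ (α - 2) * u x ^ 2
      ≤ (4 / (((n:ℝ) + 1) - 2 + α) ^ 2) * ∫ x : E, ‖x‖ ^ α * ‖gradient u x‖ ^ 2 := by
  set s : ℝ := ((n:ℝ) + 1) - 2 + α with hs_def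
  have hs : 0 < s := by
    have : (1:ℝ) ≤ (n:ℝ) := by exact_mod_cast hn
    simp only [hs_def]; linarith
  have hux : ∀ x, x ∉ tsupport u → u x = 0 := fun x hx => image_eq_zero_of_notMem_tsupport hx
  have hfd : ∀ x : E, HasFDerivAt u (fderiv ℝ u x) x :=
    fun x => (hu.differentiable (by simp) x).hasFDerivAt
  have hfcont : Continuous (fderiv ℝ u) := hu.continuous_fderiv (by simp)
  have hgrad_inner : ∀ (x y : E), fderiv ℝ u x y = @inner ℝ _ _ (gradient u x) y := by
    intro x y
    rw [gradient]
    exact (InnerProductSpace.toDual_symm_apply).symm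
  have hgrad_norm : ∀ x : E, ‖gradient u x‖ = ‖fderiv ℝ u x‖ := by
    intro x; rw [gradient]
    exact LinearIsometryEquiv.norm_map _ _
  have hgradcont : Continuous (gradient u) :=
    (InnerProductSpace.toDual ℝ _).symm.continuous.comp hfcont
  have hfderiv0 : ∀ x, x ∉ tsupport u → fderiv ℝ u x = 0 :=
    fun x hx => notMem_support.1 fun h => hx (support_fderiv_subset ℝ h)
  -- the vector field and its derivative
  set ρ' : (E) → ((E) →L[ℝ] ℝ) := fun x =>
      (u x ^ 2 * ((α-2) * ‖x‖ ^ (α-4))) • (innerSL ℝ x) + (‖x‖ ^ (α-2) * (2 * u x)) • fderiv ℝ u x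
    with hρ'_def
  set f : Fin (n+1) → (E) → ℝ := fun i x => (‖x‖ ^ (α-2) * u x ^ 2) * x i with hf_def
  set f' : Fin (n+1) → (E) → ((E) →L[ℝ] ℝ) := fun i x =>
      (‖x‖ ^ (α-2) * u x ^ 2) • (EuclideanSpace.proj i : (E) →L[ℝ] ℝ) + (x i) • ρ' x with hf'_def
  have hρd : ∀ x ∈ tsupport u, HasFDerivAt (fun y : E => ‖y‖ ^ (α-2) * u y ^ 2) (ρ' x) x := by
    intro x hx
    have hx0 : x ≠ 0 := fun h => h0u (h ▸ hx)
    have hxn : (0:ℝ) < ‖x‖ := norm_pos_iff.2 hx0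
    have hn1 : HasFDerivAt (fun y : E => (‖y‖ ^ 2 : ℝ)) ((2:ℕ) • innerSL ℝ x) x := by
      simpa using (hasFDerivAt_id x).norm_sq
    have hrw : ∀ y : E, ‖y‖ ^ (α - 2) = (‖y‖ ^ 2) ^ ((α-2)/2) := by
      intro y
      rw [← Real.rpow_natCast ‖y‖ 2, ← Real.rpow_mul (norm_nonneg _)]
      congr 1
      push_cast
      ring
    have hrpow : HasDerivAt (fun t : ℝ => t ^ ((α-2)/2))
        (((α-2)/2) * (‖x‖ ^ 2) ^ ((α-2)/2 - 1)) (‖x‖ ^ 2) :=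
      Real.hasDerivAt_rpow_const (Or.inl (by positivity))
    have hw : HasFDerivAt (fun y : E => ‖y‖ ^ (α-2))
        (((α-2) * ‖x‖ ^ (α-4)) • innerSL ℝ x) x := by
      have hcomp := hrpow.comp_hasFDerivAt x hn1
      have hcoef : (‖x‖ ^ 2 : ℝ) ^ ((α-2)/2 - 1) = ‖x‖ ^ (α - 4) := by
        rw [← Real.rpow_natCast ‖x‖ 2, ← Real.rpow_mul (norm_nonneg _)]
        congr 1
        ring
      simp only [funext hrw]
      refine hcomp.congr_fderiv ?_
      rw [hcoef]
      module
    have hu2 : HasFDerivAt (fun y : E => u y ^ 2) ((2 * u x) • fderiv ℝ u x) x := by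
      have hmm := (hfd x).mul (hfd x)
      have hfn : (fun y : E => u y ^ 2) = fun y => u y * u y := funext fun y => by ring
      rw [hfn]
      refine hmm.congr_fderiv ?_
      module
    have hfin := hw.mul hu2
    refine hfin.congr_fderiv ?_
    simp only [hρ'_def]
    module
  have hd : ∀ (i : Fin (n+1)) (x : E), HasFDerivAt (f i) (f' i x) x := by
    intro i x
    by_cases hx : x ∈ tsupport u
    · have hproj : HasFDerivAt (fun y : E => y i) (EuclideanSpace.proj i : (E) →L[ℝ] ℝ) x :=
        (EuclideanSpace.proj i : (E) →L[ℝ] ℝ).hasFDerivAt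
      exact (hρd x hx).mul hproj
    · have hev : f i =ᶠ[nhds x] fun _ => 0 := by
        filter_upwards [(isClosed_tsupport u).isOpen_compl.mem_nhds hx] with y hy
        simp [hf_def, hux y hy]
      have h0 : f' i x = 0 := by
        simp [hf'_def, hρ'_def, hux x hx]
      rw [h0]
      exact (hasFDerivAt_const (0:ℝ) x).congr_of_eventuallyEq hev
  -- compact support of the components
  have hcs : ∀ i, HasCompactSupport (f i) := by
    intro i
    refine HasCompactSupport.of_support_subset_isCompact husupp ?_
    intro x hx
    by_contra h
    exact hx (by simp [hf_def, hux x h])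
  -- the divergence
  set g : (E) → ℝ := fun x => s * u x ^ 2 + 2 * (u x * fderiv ℝ u x x) with hg_def
  set D : (E) → ℝ := fun x => ‖x‖ ^ (α - 2) * g x with hD_def
  have hα2 : α - 2 ≠ 0 := by linarith
  have hdiv : ∀ x : E, ∑ i, f' i x (EuclideanSpace.single i 1) = D x := by
    intro x
    by_cases hx0 : x = 0
    · subst hx0
      simp [hf'_def, hρ'_def, hD_def, Real.zero_rpow hα2, hux 0 h0u]
    · have hxn : (0:ℝ) < ‖x‖ := norm_pos_iff.2 hx0
      have happ : ∀ i : Fin (n+1), f' i x (EuclideanSpace.single i 1)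
          = (‖x‖ ^ (α-2) * u x ^ 2) * (EuclideanSpace.single i (1:ℝ) : E) i
            + x i * ρ' x (EuclideanSpace.single i 1) := by
        intro i
        simp [hf'_def, PiLp.proj_apply]
      have hsum1 : ∑ i, x i • (EuclideanSpace.single i (1:ℝ) : E) = x := by
        have h := (EuclideanSpace.basisFun (Fin (n+1)) ℝ).sum_repr x
        simpa [EuclideanSpace.basisFun_apply, EuclideanSpace.basisFun_repr] using h
      have hsum2 : ∑ i, x i * ρ' x (EuclideanSpace.single i 1) = ρ' x x := by
        calc ∑ i, x i * ρ' x (EuclideanSpace.single i 1)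
            = ∑ i, ρ' x (x i • (EuclideanSpace.single i (1:ℝ) : E)) := by
              simp [smul_eq_mul]
          _ = ρ' x (∑ i, x i • (EuclideanSpace.single i (1:ℝ) : E)) := (map_sum (ρ' x) _ _).symm
          _ = ρ' x x := by rw [hsum1]
      have hρx : ρ' x x = u x ^ 2 * ((α-2) * ‖x‖ ^ (α-4)) * (‖x‖ ^ 2)
          + ‖x‖ ^ (α-2) * (2 * u x) * fderiv ℝ u x x := by
        simp only [hρ'_def, ContinuousLinearMap.add_apply, ContinuousLinearMap.coe_smul',
          Pi.smul_apply, smul_eq_mul, innerSL_apply_apply, real_inner_self_eq_norm_sq]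
      have hpow : ‖x‖ ^ (α-4) * ‖x‖ ^ 2 = ‖x‖ ^ (α-2) := by
        rw [← Real.rpow_natCast ‖x‖ 2, ← Real.rpow_add hxn]
        congr 1
        push_cast
        ring
      have hone : ∀ i : Fin (n+1), (EuclideanSpace.single i (1:ℝ) : E) i = 1 := by
        intro i; simp [EuclideanSpace.single_apply]
      simp only [happ, hone, mul_one, Finset.sum_add_distrib, hsum2, Finset.sum_const,
        Finset.card_univ, Fintype.card_fin, nsmul_eq_mul, hρx, hD_def, hg_def, hs_def]
      push_cast
      linear_combination (α - 2) * u x ^ 2 * hpow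
  -- continuity and integrability helpers
  have haux : ∀ (w : (E) → ℝ), Continuous w → Function.support w ⊆ tsupport u →
      ∀ β : ℝ, Integrable (fun x : E => ‖x‖ ^ β * w x) := by
    intro w hwc hws β
    have hts : tsupport w ⊆ tsupport u := closure_minimal hws (isClosed_tsupport u)
    exact integrable_aux β w hwc
      (HasCompactSupport.of_support_subset_isCompact husupp hws)
      (fun h => h0u (hts h))
  have hDucont : Continuous (fun x : E => fderiv ℝ u x x) := hfcont.clm_apply continuous_id
  have hgcont : Continuous g := by
    apply Continuous.add
    · exact continuous_const.mul (hu.continuous.pow 2)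
    · exact continuous_const.mul (hu.continuous.mul hDucont)
  have hgsupp : Function.support g ⊆ tsupport u := by
    intro x hx
    by_contra h
    exact hx (by simp [hg_def, hux x h])
  have hg0 : (0 : E) ∉ tsupport g := fun h =>
    h0u (closure_minimal hgsupp (isClosed_tsupport u) h)
  have hDcont : Continuous D := cont_aux (α - 2) g hgcont hg0
  -- divergence theorem
  have hintD : ∫ x : E, D x = 0 := by
    have heq : (fun x : E => ∑ i, f' i x (EuclideanSpace.single i 1)) = D := funext hdiv
    have h := integral_euc_div_eq_zero f f' hd hcs (by rw [heq]; exact hDcont)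
    rwa [heq] at h
  -- integrable pieces
  have hIA : Integrable (fun x : E => ‖x‖ ^ (α-2) * u x ^ 2) := by
    refine haux _ (hu.continuous.pow 2) ?_ _
    intro x hx
    by_contra h
    exact hx (by simp [hux x h])
  have hIC : Integrable (fun x : E => ‖x‖ ^ (α-2) * (u x * fderiv ℝ u x x)) := by
    refine haux _ (hu.continuous.mul hDucont) ?_ _
    intro x hx
    by_contra h
    exact hx (by simp [hux x h])
  have hgrad0 : ∀ x, x ∉ tsupport u → gradient u x = 0 := by
    intro x hx
    rw [gradient, hfderiv0 x hx]
    simp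
  have hIB : Integrable (fun x : E => ‖x‖ ^ α * ‖gradient u x‖ ^ 2) := by
    refine haux _ ((hgradcont.norm).pow 2) ?_ _
    intro x hx
    by_contra h
    exact hx (by simp [hgrad0 x h])
  -- split the divergence integral
  set A' : ℝ := ∫ x : E, ‖x‖ ^ (α-2) * u x ^ 2 with hA'_def
  set B' : ℝ := ∫ x : E, ‖x‖ ^ α * ‖gradient u x‖ ^ 2 with hB'_def
  set C' : ℝ := ∫ x : E, ‖x‖ ^ (α-2) * (u x * fderiv ℝ u x x) with hC'_def
  have hsplit : s * A' + 2 * C' = 0 := by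
    have hDfun : D = fun x : E => s * (‖x‖ ^ (α-2) * u x ^ 2)
        + 2 * (‖x‖ ^ (α-2) * (u x * fderiv ℝ u x x)) := by
      funext x
      simp only [hD_def, hg_def]
      ring
    rw [hA'_def, hC'_def, ← integral_const_mul, ← integral_const_mul,
      ← integral_add (hIA.const_mul s) (hIC.const_mul 2)]
    rw [← hintD, hDfun]
  -- pointwise inequality
  have hpt : ∀ x : E, -(2 * (‖x‖ ^ (α-2) * (u x * fderiv ℝ u x x)))
      ≤ (s/2) * (‖x‖ ^ (α-2) * u x ^ 2) + (2/s) * (‖x‖ ^ α * ‖gradient u x‖ ^ 2) := by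
    intro x
    by_cases hx0 : x = 0
    · subst hx0
      simp [Real.zero_rpow hα2, Real.zero_rpow (ne_of_gt hα0)]
    · have hxn : (0:ℝ) < ‖x‖ := norm_pos_iff.2 hx0
      have ha : (0:ℝ) < ‖x‖ ^ (α-2) := Real.rpow_pos_of_pos hxn _
      have habs : |fderiv ℝ u x x| ≤ ‖gradient u x‖ * ‖x‖ := by
        rw [hgrad_inner x x]
        exact abs_real_inner_le_norm _ _
      have hpow2 : ‖x‖ ^ α = ‖x‖ ^ (α-2) * ‖x‖ ^ 2 := by
        rw [← Real.rpow_natCast ‖x‖ 2, ← Real.rpow_add hxn]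
        norm_num
      set v := u x with hv
      set G := ‖gradient u x‖ with hG
      set r := ‖x‖ with hr
      have hGnn : 0 ≤ G := norm_nonneg _
      have hrnn : 0 ≤ r := norm_nonneg _
      have key1 : -(v * fderiv ℝ u x x) ≤ |v| * (G * r) := by
        calc -(v * fderiv ℝ u x x) ≤ |v * fderiv ℝ u x x| := neg_le_abs _
          _ = |v| * |fderiv ℝ u x x| := abs_mul _ _
          _ ≤ |v| * (G * r) := mul_le_mul_of_nonneg_left habs (abs_nonneg v)
      have key2 : 2 * (|v| * (G * r)) ≤ (s/2) * v ^ 2 + (2/s) * (r ^ 2 * G ^ 2) := by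
        have h := amgm_aux s |v| (G * r) hs
        have hva : |v| ^ 2 = v ^ 2 := sq_abs v
        have ht2 : (G * r) ^ 2 = r ^ 2 * G ^ 2 := by ring
        rw [hva, ht2] at h
        exact h
      have step : -(2 * (r ^ (α-2) * (v * fderiv ℝ u x x)))
          ≤ r ^ (α-2) * ((s/2) * v ^ 2 + (2/s) * (r ^ 2 * G ^ 2)) := by
        calc -(2 * (r ^ (α-2) * (v * fderiv ℝ u x x)))
            = r ^ (α-2) * (2 * -(v * fderiv ℝ u x x)) := by ring
          _ ≤ r ^ (α-2) * (2 * (|v| * (G * r))) := by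
              apply mul_le_mul_of_nonneg_left _ ha.le
              linarith [key1]
          _ ≤ r ^ (α-2) * ((s/2) * v ^ 2 + (2/s) * (r ^ 2 * G ^ 2)) :=
              mul_le_mul_of_nonneg_left key2 ha.le
      calc -(2 * (r ^ (α-2) * (v * fderiv ℝ u x x)))
          ≤ r ^ (α-2) * ((s/2) * v ^ 2 + (2/s) * (r ^ 2 * G ^ 2)) := step
        _ = (s/2) * (r ^ (α-2) * v ^ 2) + (2/s) * ((r ^ (α-2) * r ^ 2) * G ^ 2) := by ring
        _ = (s/2) * (r ^ (α-2) * v ^ 2) + (2/s) * (r ^ α * G ^ 2) := by rw [← hpow2]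
  -- integrate the pointwise inequality
  have hmono : ∫ x : E, -(2 * (‖x‖ ^ (α-2) * (u x * fderiv ℝ u x x)))
      ≤ ∫ x : E, ((s/2) * (‖x‖ ^ (α-2) * u x ^ 2) + (2/s) * (‖x‖ ^ α * ‖gradient u x‖ ^ 2)) :=
    integral_mono ((hIC.const_mul 2).neg) ((hIA.const_mul (s/2)).add (hIB.const_mul (2/s))) hpt
  have hL : ∫ x : E, -(2 * (‖x‖ ^ (α-2) * (u x * fderiv ℝ u x x))) = s * A' := by
    rw [integral_neg, integral_const_mul, ← hC'_def]
    linarith [hsplit]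
  have hR : ∫ x : E, ((s/2) * (‖x‖ ^ (α-2) * u x ^ 2) + (2/s) * (‖x‖ ^ α * ‖gradient u x‖ ^ 2))
      = (s/2) * A' + (2/s) * B' := by
    rw [integral_add (hIA.const_mul (s/2)) (hIB.const_mul (2/s)), integral_const_mul,
      integral_const_mul, hA'_def, hB'_def]
  rw [hL, hR] at hmono
  have h2 : (s/2) * A' ≤ (2/s) * B' := by linarith
  have h3 := mul_le_mul_of_nonneg_left h2 (by positivity : (0:ℝ) ≤ 2/s)
  calc A' = (2/s) * ((s/2) * A') := by field_simp
    _ ≤ (2/s) * ((2/s) * B') := h3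
    _ = 4 / s ^ 2 * B' := by field_simp; ring
end main

/-- Weighted Hardy inequality for the degenerate weight `|x|^α` with
boundary-point degeneracy at `0 ∈ ∂Ω`. -/
theorem hardy_inequality (N : ℕ) (hN : 2 ≤ N) (α : ℝ) (hα : α ∈ Set.Ioo (0:ℝ) 1)
    (Ω : Set (EuclideanSpace ℝ (Fin N))) (hΩopen : IsOpen Ω) (hΩbd : Bornology.IsBounded Ω)
    (hΩne : Ω.Nonempty) (h0 : (0 : EuclideanSpace ℝ (Fin N)) ∈ frontier Ω)
    (u : EuclideanSpace ℝ (Fin N) → ℝ) (hu : ContDiff ℝ (⊤ : ℕ∞) u)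
    (husupp : HasCompactSupport u) (hsupp : tsupport u ⊆ Ω) :
    ∫ x in Ω, ‖x‖ ^ (α - 2) * u x ^ 2
      ≤ (4 / ((N : ℝ) - 2 + α) ^ 2) * ∫ x in Ω, ‖x‖ ^ α * ‖gradient u x‖ ^ 2 := by
  obtain ⟨hα0, hα1⟩ := hα
  obtain ⟨n, rfl⟩ : ∃ n, N = n + 1 := ⟨N - 1, by omega⟩
  have hn : 1 ≤ n := by omega
  have h0u : (0 : EuclideanSpace ℝ (Fin (n+1))) ∉ tsupport u := by
    intro h
    rw [hΩopen.frontier_eq] at h0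
    exact h0.2 (hsupp h)
  have hgrad0 : ∀ x, x ∉ tsupport u → gradient u x = 0 := by
    intro x hx
    have hf0 : fderiv ℝ u x = 0 :=
      Function.notMem_support.1 fun h => hx (support_fderiv_subset ℝ h)
    rw [gradient, hf0]
    simp
  have hA : ∫ x in Ω, ‖x‖ ^ (α - 2) * u x ^ 2
      = ∫ x : EuclideanSpace ℝ (Fin (n+1)), ‖x‖ ^ (α - 2) * u x ^ 2 := by
    refine setIntegral_eq_integral_of_forall_compl_eq_zero fun x hx => ?_
    have : u x = 0 := image_eq_zero_of_notMem_tsupport fun h => hx (hsupp h)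
    simp [this]
  have hB : ∫ x in Ω, ‖x‖ ^ α * ‖gradient u x‖ ^ 2
      = ∫ x : EuclideanSpace ℝ (Fin (n+1)), ‖x‖ ^ α * ‖gradient u x‖ ^ 2 := by
    refine setIntegral_eq_integral_of_forall_compl_eq_zero fun x hx => ?_
    have : gradient u x = 0 := hgrad0 x fun h => hx (hsupp h)
    simp [this]
  rw [hA, hB]
  have hmain := hardy_aux hn α hα0 hα1 u hu husupp h0u
  have hc : ((n + 1 : ℕ) : ℝ) = (n:ℝ) + 1 := by push_cast; ring
  rw [hc]
  exact hmain
end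

section
/- Let N ≥ 2, α ∈ (0,1), ε > 0, and let z ∈ C^∞(ℝ^N). Let Ω_ε ⊂ ℝ^N be a bounded domain with smooth boundary such that 0 ∉ closure(Ω_ε) and z = 0 on ∂Ω_ε ∩ {x : dist(x, 0) > ε}. If x·ν(x) ≤ 0 on ∂Ω_ε for the outward normal ν wherever z ≠ 0, then (N+α-2) ∫_{Ω_ε} |x|^{α-2} z² dx ≤ 2 (∫_{Ω_ε} |x|^{α-2} z² dx)^{1/2} (∫_{Ω_ε} |x|^α |∇z|² dx)^{1/2}. -/
open MeasureTheory Real Metric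
open scoped RealInnerProductSpace

lemma euclid_sum_single {N : ℕ} (x : EuclideanSpace ℝ (Fin N)) :
    ∑ i : Fin N, x i • EuclideanSpace.single i (1:ℝ) = x := by
  have := (EuclideanSpace.basisFun (Fin N) ℝ).sum_repr x
  simpa [EuclideanSpace.basisFun_apply, EuclideanSpace.basisFun_repr] using this

lemma clm_sum_single {N : ℕ} (L : EuclideanSpace ℝ (Fin N) →L[ℝ] ℝ)
    (x : EuclideanSpace ℝ (Fin N)) :
    ∑ i : Fin N, L (EuclideanSpace.single i (1:ℝ)) * x i = L x := by
  conv_rhs => rw [← euclid_sum_single x]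
  rw [map_sum]
  congr 1
  ext i
  rw [L.map_smul]
  simp [mul_comm]

lemma hasFDerivAt_norm_rpow_of_ne {E : Type*} [NormedAddCommGroup E] [InnerProductSpace ℝ E]
    {x : E} (hx : x ≠ 0) (p : ℝ) :
    HasFDerivAt (fun y : E ↦ ‖y‖ ^ p) ((p * ‖x‖ ^ (p - 2)) • innerSL ℝ x) x := by
  apply HasStrictFDerivAt.hasFDerivAt
  convert (hasStrictFDerivAt_norm_sq x).rpow_const (p := p / 2) (by simp [hx]) using 0
  simp_rw [← Real.rpow_natCast_mul (norm_nonneg _), ← Nat.cast_smul_eq_nsmul ℝ, smul_smul]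
  ring_nf

lemma sum_fderiv_div_eq {N : ℕ} {α : ℝ} (z : EuclideanSpace ℝ (Fin N) → ℝ)
    (hz : ContDiff ℝ (⊤ : ℕ∞) z) (F : EuclideanSpace ℝ (Fin N) → EuclideanSpace ℝ (Fin N))
    {x : EuclideanSpace ℝ (Fin N)} (hx : x ≠ 0)
    (hF : F =ᶠ[nhds x] fun y => (z y ^ 2 * ‖y‖ ^ (α - 2)) • y) :
    ∑ i : Fin N, (fderiv ℝ F x (EuclideanSpace.single i (1:ℝ))) i
      = ((N : ℝ) + α - 2) * (‖x‖ ^ (α - 2) * z x ^ 2)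
        + 2 * (‖x‖ ^ (α - 2) * (z x * ⟪x, gradient z x⟫)) := by
  set dz := fderiv ℝ z x with hdz
  have hzx : HasFDerivAt z dz x := (hz.differentiable (by simp) x).hasFDerivAt
  have hn := hasFDerivAt_norm_rpow_of_ne hx (α - 2)
  have hfun : (fun y : EuclideanSpace ℝ (Fin N) => (z y ^ 2 * ‖y‖ ^ (α - 2)) • y)
      = fun y => ((z y * z y) * ‖y‖ ^ (α - 2)) • y := by
    funext y; rw [sq]
  rw [hfun] at hF
  have hc : HasFDerivAt (fun y => (z y * z y) * ‖y‖ ^ (α - 2))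
      ((z x * z x) • ((α - 2) * ‖x‖ ^ (α - 2 - 2)) • innerSL ℝ x
        + (‖x‖ ^ (α - 2)) • (z x • dz + z x • dz)) x := (hzx.mul hzx).mul hn
  set Dc := ((z x * z x) • ((α - 2) * ‖x‖ ^ (α - 2 - 2)) • innerSL ℝ x
        + (‖x‖ ^ (α - 2)) • (z x • dz + z x • dz)) with hDc
  set cx : ℝ := z x * z x * ‖x‖ ^ (α - 2) with hcx
  have hG : HasFDerivAt (fun y => ((z y * z y) * ‖y‖ ^ (α - 2)) • y)
      (cx • ContinuousLinearMap.id ℝ (EuclideanSpace ℝ (Fin N)) + Dc.smulRight x) x :=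
    hc.smul (hasFDerivAt_id x)
  have hFx := hG.congr_of_eventuallyEq hF
  rw [hFx.fderiv]
  have hsum : ∑ i : Fin N,
      ((cx • ContinuousLinearMap.id ℝ (EuclideanSpace ℝ (Fin N)) + Dc.smulRight x)
        (EuclideanSpace.single i (1:ℝ))) i
      = (N : ℝ) * cx + Dc x := by
    have h1 : ∀ i : Fin N,
        ((cx • ContinuousLinearMap.id ℝ (EuclideanSpace ℝ (Fin N)) + Dc.smulRight x)
          (EuclideanSpace.single i (1:ℝ))) i
        = cx + Dc (EuclideanSpace.single i (1:ℝ)) * x i := by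
      intro i
      simp [EuclideanSpace.single_apply]
    rw [Finset.sum_congr rfl (fun i _ => h1 i), Finset.sum_add_distrib,
      Finset.sum_const, clm_sum_single]
    simp [mul_comm]
  rw [hsum]
  have hDcx : Dc x = z x * z x * ((α - 2) * ‖x‖ ^ (α - 2 - 2)) * ⟪x, x⟫
      + ‖x‖ ^ (α - 2) * (2 * z x) * dz x := by
    simp only [hDc, ContinuousLinearMap.add_apply, ContinuousLinearMap.coe_smul',
      Pi.smul_apply, innerSL_apply_apply, smul_eq_mul]
    ring
  have hinner : ⟪x, x⟫ = ‖x‖ ^ (2 : ℕ) := real_inner_self_eq_norm_sq x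
  have hpow : ‖x‖ ^ (α - 2 - 2) * ‖x‖ ^ (2 : ℕ) = ‖x‖ ^ (α - 2) := by
    rw [← Real.rpow_natCast ‖x‖ 2, ← Real.rpow_add (norm_pos_iff.2 hx)]
    norm_num
  have hgrad : dz x = ⟪x, gradient z x⟫ := by
    rw [real_inner_comm]
    simp [gradient, InnerProductSpace.toDual_symm_apply, hdz]
  rw [hDcx, hinner, hgrad, hcx]
  linear_combination (z x * z x * (α - 2)) * hpow

/-- Key intermediate inequality in the proof of the Hardy inequality
(Lemma 2.1). `Ωε` is a bounded smooth domain avoiding the origin, `ν` its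
outward unit normal and `μS` the surface measure on `∂Ωε`, characterized by
the divergence theorem. If `z` is smooth, vanishes on the part of `∂Ωε` at
distance `> ε` from the origin, and `x·ν(x) ≤ 0` wherever `z ≠ 0` on `∂Ωε`,
then
`(N+α-2) ∫ |x|^{α-2} z² ≤ 2 (∫ |x|^{α-2} z²)^{1/2} (∫ |x|^α |∇z|²)^{1/2}`. -/
theorem hardy_intermediate (N : ℕ) (hN : 2 ≤ N) (α : ℝ) (hα : α ∈ Set.Ioo (0:ℝ) 1)
    (ε : ℝ) (hε : 0 < ε)
    (Ωε : Set (EuclideanSpace ℝ (Fin N))) (hopen : IsOpen Ωε)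
    (hbd : Bornology.IsBounded Ωε) (hne : Ωε.Nonempty)
    (h0 : (0 : EuclideanSpace ℝ (Fin N)) ∉ closure Ωε)
    (ν : EuclideanSpace ℝ (Fin N) → EuclideanSpace ℝ (Fin N))
    (μS : Measure (EuclideanSpace ℝ (Fin N)))
    (hGauss : ∀ F : EuclideanSpace ℝ (Fin N) → EuclideanSpace ℝ (Fin N),
      ContDiff ℝ 1 F →
      ∫ x in Ωε, (∑ i : Fin N, (fderiv ℝ F x (EuclideanSpace.single i (1:ℝ))) i)
        = ∫ x in frontier Ωε, ⟪F x, ν x⟫ ∂μS)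
    (z : EuclideanSpace ℝ (Fin N) → ℝ) (hz : ContDiff ℝ (⊤ : ℕ∞) z)
    (hzbd : ∀ x ∈ frontier Ωε, ε < dist x 0 → z x = 0)
    (hsign : ∀ x ∈ frontier Ωε, z x ≠ 0 → ⟪x, ν x⟫ ≤ 0) :
    ((N : ℝ) + α - 2) * ∫ x in Ωε, ‖x‖ ^ (α - 2) * z x ^ 2
      ≤ 2 * Real.sqrt (∫ x in Ωε, ‖x‖ ^ (α - 2) * z x ^ 2)
          * Real.sqrt (∫ x in Ωε, ‖x‖ ^ α * ‖gradient z x‖ ^ 2) := by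
  classical
  -- distance from origin to the closure
  set r : ℝ := Metric.infDist 0 (closure Ωε) with hr_def
  have hclne : (closure Ωε).Nonempty := hne.closure
  have hr : 0 < r :=
    (IsClosed.notMem_iff_infDist_pos isClosed_closure hclne).mp h0
  have hrle : ∀ x ∈ closure Ωε, r ≤ ‖x‖ := by
    intro x hx
    have := Metric.infDist_le_dist_of_mem (x := (0:EuclideanSpace ℝ (Fin N))) hx
    rwa [dist_zero_left] at this
  have hx0 : ∀ x ∈ closure Ωε, x ≠ 0 := by
    intro x hx h
    exact h0 (h ▸ hx)
  -- smooth cutoff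
  set d : ℝ := (r/2)^2 - (r/3)^2 with hd_def
  have hd : 0 < d := by rw [hd_def]; nlinarith [hr]
  set χ : EuclideanSpace ℝ (Fin N) → ℝ := fun y => Real.smoothTransition ((⟪y, y⟫ - (r/3)^2) / d) with hχ_def
  have hχ_smooth : ContDiff ℝ 1 χ := by
    have h1 : ContDiff ℝ 1 (fun y : EuclideanSpace ℝ (Fin N) => (⟪y, y⟫ - (r/3)^2) / d) :=
      ((contDiff_id.inner ℝ contDiff_id).sub contDiff_const).div_const d
    exact (Real.smoothTransition.contDiff (n := 1)).comp h1
  have hχ0 : ∀ y : EuclideanSpace ℝ (Fin N), ‖y‖ ≤ r/3 → χ y = 0 := by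
    intro y hy
    apply Real.smoothTransition.zero_of_nonpos
    apply div_nonpos_of_nonpos_of_nonneg _ hd.le
    have : ⟪y, y⟫ = ‖y‖ ^ 2 := real_inner_self_eq_norm_sq y
    nlinarith [norm_nonneg y]
  have hχ1 : ∀ y : EuclideanSpace ℝ (Fin N), r/2 ≤ ‖y‖ → χ y = 1 := by
    intro y hy
    apply Real.smoothTransition.one_of_one_le
    rw [le_div_iff₀ hd]
    have : ⟪y, y⟫ = ‖y‖ ^ 2 := real_inner_self_eq_norm_sq y
    nlinarith
  have hχ01 : ∀ y : EuclideanSpace ℝ (Fin N), 0 ≤ χ y := fun y => Real.smoothTransition.nonneg _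
  -- the vector field
  set F : EuclideanSpace ℝ (Fin N) → EuclideanSpace ℝ (Fin N) := fun y => (χ y * (z y ^ 2 * ‖y‖ ^ (α - 2))) • y with hF_def
  have hF : ContDiff ℝ 1 F := by
    rw [contDiff_iff_contDiffAt]
    intro x
    by_cases hx : ‖x‖ < r/3
    · have hev : F =ᶠ[nhds x] (fun _ => (0:EuclideanSpace ℝ (Fin N))) := by
        have hU : IsOpen {y : EuclideanSpace ℝ (Fin N) | ‖y‖ < r/3} := isOpen_lt continuous_norm continuous_const
        filter_upwards [hU.mem_nhds hx] with y hy
        simp [hF_def, hχ0 y (le_of_lt hy)]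
      exact contDiffAt_const.congr_of_eventuallyEq hev
    · push_neg at hx
      have hxne : x ≠ 0 := by
        intro h
        rw [h, norm_zero] at hx
        nlinarith
      have hnorm : ContDiffAt ℝ 1 (fun y : EuclideanSpace ℝ (Fin N) => ‖y‖ ^ (α - 2)) x :=
        (contDiffAt_norm ℝ hxne).rpow_const_of_ne (norm_ne_zero_iff.2 hxne)
      have hmain : ContDiffAt ℝ 1
          (fun y : EuclideanSpace ℝ (Fin N) => (χ y * (z y ^ 2 * ‖y‖ ^ (α - 2))) • y) x :=
        (hχ_smooth.contDiffAt.mul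
          (((hz.of_le (by simp)).contDiffAt.pow 2).mul hnorm)).smul contDiffAt_id
      exact hmain
  -- pointwise divergence identity on Ωε
  have hdiv : ∀ x ∈ Ωε,
      ∑ i : Fin N, (fderiv ℝ F x (EuclideanSpace.single i (1:ℝ))) i
        = ((N : ℝ) + α - 2) * (‖x‖ ^ (α - 2) * z x ^ 2)
          + 2 * (‖x‖ ^ (α - 2) * (z x * ⟪x, gradient z x⟫)) := by
    intro x hx
    have hxc : x ∈ closure Ωε := subset_closure hx
    apply sum_fderiv_div_eq z hz F (hx0 x hxc)
    have hU : IsOpen {y : EuclideanSpace ℝ (Fin N) | r/2 < ‖y‖} := isOpen_lt continuous_const continuous_norm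
    have hxU : x ∈ {y : EuclideanSpace ℝ (Fin N) | r/2 < ‖y‖} := by
      have := hrle x hxc
      simp only [Set.mem_setOf_eq]
      linarith
    filter_upwards [hU.mem_nhds hxU] with y hy
    simp [hF_def, hχ1 y (le_of_lt hy)]
  -- abbreviations
  set I1 : EuclideanSpace ℝ (Fin N) → ℝ := fun x => ‖x‖ ^ (α - 2) * z x ^ 2 with hI1_def
  set I2 : EuclideanSpace ℝ (Fin N) → ℝ :=
    fun x => ‖x‖ ^ (α - 2) * (z x * ⟪x, gradient z x⟫) with hI2_def
  set I3 : EuclideanSpace ℝ (Fin N) → ℝ := fun x => ‖x‖ ^ α * ‖gradient z x‖ ^ 2 with hI3_def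
  set f : EuclideanSpace ℝ (Fin N) → ℝ := fun x => ‖x‖ ^ ((α - 2)/2) * |z x| with hf_def2
  set g : EuclideanSpace ℝ (Fin N) → ℝ := fun x => ‖x‖ ^ (α/2) * ‖gradient z x‖ with hg_def2
  have hK : IsCompact (closure Ωε) := hbd.isCompact_closure
  have hzc : Continuous z := hz.continuous
  have hgc : Continuous (gradient z) := by
    have h1 : Continuous (fderiv ℝ z) := hz.continuous_fderiv (by simp)
    have h2 : gradient z = fun x =>
        (InnerProductSpace.toDual ℝ (EuclideanSpace ℝ (Fin N))).symm (fderiv ℝ z x) := rfl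
    rw [h2]
    exact (InnerProductSpace.toDual ℝ (EuclideanSpace ℝ (Fin N))).symm.continuous.comp h1
  have hrp : ∀ p : ℝ, ContinuousOn (fun x : EuclideanSpace ℝ (Fin N) => ‖x‖ ^ p)
      (closure Ωε) := by
    intro p x hx
    exact (continuous_norm.continuousAt.rpow_const
      (Or.inl (norm_ne_zero_iff.2 (hx0 x hx)))).continuousWithinAt
  have hIntOn : ∀ {u : EuclideanSpace ℝ (Fin N) → ℝ}, ContinuousOn u (closure Ωε) →
      IntegrableOn u Ωε := fun hu => (hu.integrableOn_compact hK).mono_set subset_closure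
  have hI1con : ContinuousOn I1 (closure Ωε) := (hrp (α - 2)).mul ((hzc.pow 2).continuousOn)
  have hI2con : ContinuousOn I2 (closure Ωε) :=
    (hrp (α - 2)).mul ((hzc.mul (continuous_id.inner hgc)).continuousOn)
  have hI3con : ContinuousOn I3 (closure Ωε) := (hrp α).mul ((hgc.norm.pow 2).continuousOn)
  have hfcon : ContinuousOn f (closure Ωε) := (hrp ((α - 2)/2)).mul (hzc.abs.continuousOn)
  have hgcon : ContinuousOn g (closure Ωε) := (hrp (α/2)).mul (hgc.norm.continuousOn)
  have hI1int : IntegrableOn I1 Ωε := hIntOn hI1con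
  have hI2int : IntegrableOn I2 Ωε := hIntOn hI2con
  have hI3int : IntegrableOn I3 Ωε := hIntOn hI3con
  have hfgint : IntegrableOn (fun x => f x * g x) Ωε := hIntOn (hfcon.mul hgcon)
  -- f² = I1, g² = I3
  have hr2 : ∀ y : ℝ, y ^ (2:ℝ) = y ^ (2:ℕ) := by
    intro y
    rw [← Real.rpow_natCast y 2]
    norm_num
  have hfsq : ∀ x : EuclideanSpace ℝ (Fin N), f x ^ (2:ℕ) = I1 x := by
    intro x
    simp only [hf_def2, hI1_def]
    rw [mul_pow, ← Real.rpow_natCast (‖x‖ ^ ((α - 2)/2)) 2, ← Real.rpow_mul (norm_nonneg x),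
      sq_abs]
    norm_num
  have hgsq : ∀ x : EuclideanSpace ℝ (Fin N), g x ^ (2:ℕ) = I3 x := by
    intro x
    simp only [hg_def2, hI3_def]
    rw [mul_pow, ← Real.rpow_natCast (‖x‖ ^ (α/2)) 2, ← Real.rpow_mul (norm_nonneg x)]
    norm_num
  have hf2 : (fun x => f x ^ (2:ℝ)) = I1 := by
    funext x
    rw [hr2, hfsq]
  have hg2 : (fun x => g x ^ (2:ℝ)) = I3 := by
    funext x
    rw [hr2, hgsq]
  -- Gauss and the sign of the boundary term
  have hgauss := hGauss F hF
  have hbdry : ∫ x in frontier Ωε, ⟪F x, ν x⟫ ∂μS ≤ 0 := by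
    apply setIntegral_nonpos isClosed_frontier.measurableSet
    intro x hx
    rcases eq_or_ne (z x) 0 with hzx | hzx
    · simp [hF_def, hzx]
    · have h1 := hsign x hx hzx
      have h2 : ⟪F x, ν x⟫ = (χ x * (z x ^ 2 * ‖x‖ ^ (α - 2))) * ⟪x, ν x⟫ :=
        real_inner_smul_left _ _ _
      rw [h2]
      exact mul_nonpos_of_nonneg_of_nonpos
        (mul_nonneg (hχ01 x) (mul_nonneg (sq_nonneg _) (Real.rpow_nonneg (norm_nonneg _) _))) h1
  have hsplit : ∫ x in Ωε, (∑ i : Fin N, (fderiv ℝ F x (EuclideanSpace.single i (1:ℝ))) i)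
      = ((N : ℝ) + α - 2) * (∫ x in Ωε, I1 x) + 2 * (∫ x in Ωε, I2 x) := by
    rw [setIntegral_congr_fun hopen.measurableSet (fun x hx => hdiv x hx)]
    rw [integral_add (hI1int.const_mul _) (hI2int.const_mul _),
      integral_const_mul, integral_const_mul]
  -- pointwise Cauchy-Schwarz bound
  have hptw : ∀ x ∈ Ωε, -(I2 x) ≤ f x * g x := by
    intro x hx
    have hxne := hx0 x (subset_closure hx)
    have hnx : (0:ℝ) < ‖x‖ := norm_pos_iff.2 hxne
    have e1 : ‖x‖ ^ ((α - 2)/2) * ‖x‖ ^ (α/2) = ‖x‖ ^ (α - 1) := by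
      rw [← Real.rpow_add hnx]
      congr 1
      ring
    have e2 : ‖x‖ ^ (α - 2) * ‖x‖ = ‖x‖ ^ (α - 1) := by
      nth_rewrite 2 [← Real.rpow_one ‖x‖]
      rw [← Real.rpow_add hnx]
      congr 1
      ring
    have h3 : |⟪x, gradient z x⟫| ≤ ‖x‖ * ‖gradient z x‖ := abs_real_inner_le_norm x _
    have h4 : -(I2 x) ≤ |I2 x| := neg_le_abs _
    have h5 : |I2 x| = ‖x‖ ^ (α - 2) * (|z x| * |⟪x, gradient z x⟫|) := by
      rw [hI2_def]
      rw [abs_mul, abs_mul, abs_of_nonneg (Real.rpow_nonneg (norm_nonneg x) _)]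
    have h6 : |I2 x| ≤ ‖x‖ ^ (α - 2) * (|z x| * (‖x‖ * ‖gradient z x‖)) := by
      rw [h5]
      apply mul_le_mul_of_nonneg_left _ (Real.rpow_nonneg (norm_nonneg x) _)
      exact mul_le_mul_of_nonneg_left h3 (abs_nonneg _)
    have h7 : ‖x‖ ^ (α - 2) * (|z x| * (‖x‖ * ‖gradient z x‖)) = f x * g x := by
      simp only [hf_def2, hg_def2]
      linear_combination (|z x| * ‖gradient z x‖) * e2 - (|z x| * ‖gradient z x‖) * e1
    linarith
  -- Hölder / Cauchy-Schwarz in L²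
  have hmes_f : AEStronglyMeasurable f (volume.restrict Ωε) :=
    (hfcon.mono subset_closure).aestronglyMeasurable hopen.measurableSet
  have hmes_g : AEStronglyMeasurable g (volume.restrict Ωε) :=
    (hgcon.mono subset_closure).aestronglyMeasurable hopen.measurableSet
  have hf2int : Integrable (fun x => f x ^ 2) (volume.restrict Ωε) := by
    have he : (fun x => f x ^ 2) = I1 := funext hfsq
    rw [he]; exact hI1int
  have hg2int : Integrable (fun x => g x ^ 2) (volume.restrict Ωε) := by
    have he : (fun x => g x ^ 2) = I3 := funext hgsq
    rw [he]; exact hI3int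
  have hmemf : MemLp f (ENNReal.ofReal 2) (volume.restrict Ωε) := by
    rw [ENNReal.ofReal_ofNat]
    exact (memLp_two_iff_integrable_sq hmes_f).mpr hf2int
  have hmemg : MemLp g (ENNReal.ofReal 2) (volume.restrict Ωε) := by
    rw [ENNReal.ofReal_ofNat]
    exact (memLp_two_iff_integrable_sq hmes_g).mpr hg2int
  have hf0 : 0 ≤ᵐ[volume.restrict Ωε] f :=
    Filter.Eventually.of_forall fun x =>
      mul_nonneg (Real.rpow_nonneg (norm_nonneg _) _) (abs_nonneg _)
  have hg0 : 0 ≤ᵐ[volume.restrict Ωε] g :=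
    Filter.Eventually.of_forall fun x =>
      mul_nonneg (Real.rpow_nonneg (norm_nonneg _) _) (norm_nonneg _)
  have hconj : Real.HolderConjugate 2 2 := Real.HolderConjugate.two_two
  have hhold := integral_mul_le_Lp_mul_Lq_of_nonneg hconj hf0 hg0 hmemf hmemg
  rw [hf2, hg2] at hhold
  rw [← Real.sqrt_eq_rpow, ← Real.sqrt_eq_rpow] at hhold
  -- assemble
  have hkey : ((N : ℝ) + α - 2) * (∫ x in Ωε, I1 x) ≤ 2 * ∫ x in Ωε, f x * g x := by
    have h1 : ((N : ℝ) + α - 2) * (∫ x in Ωε, I1 x) + 2 * (∫ x in Ωε, I2 x) ≤ 0 :=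
      le_trans (le_of_eq (hsplit.symm.trans hgauss)) hbdry
    have h2 : ∫ x in Ωε, -(I2 x) ≤ ∫ x in Ωε, f x * g x :=
      setIntegral_mono_on hI2int.neg hfgint hopen.measurableSet hptw
    rw [integral_neg] at h2
    linarith
  calc ((N : ℝ) + α - 2) * (∫ x in Ωε, I1 x)
      ≤ 2 * ∫ x in Ωε, f x * g x := hkey
    _ ≤ 2 * (Real.sqrt (∫ x in Ωε, I1 x) * Real.sqrt (∫ x in Ωε, I3 x)) := by
        apply mul_le_mul_of_nonneg_left _ (by norm_num : (0:ℝ) ≤ 2)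
        exact hhold
    _ = 2 * Real.sqrt (∫ x in Ωε, I1 x) * Real.sqrt (∫ x in Ωε, I3 x) := by ring
end
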